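/- Let n ≥ 1, let Θ ∈ ℂ^{n×n} be symmetric with positive definite real part, and let ν ∈ ℕⁿ. Then for every r ∈ ℝⁿ the gradient (as a column vector) of HG_Θ^ν satisfies: ∇_r HG_Θ^ν(r) = Θ⁻¹·(2·φ_ν(r) − r·HG_Θ^ν(r)). -/

import Mathlib

open scoped BigOperators
open MeasureTheory Matrix

noncomputable section

namespace AHGPaper

/-- Complex partial derivative in coordinate `j`. -/
def cpderiv {n : ℕ} (j : Fin n) (f : (Fin n → ℂ) → ℂ) : (Fin n → ℂ) → ℂ :=
  fun x => deriv (fun t : ℂ => f (Function.update x j t)) (x j)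

/-- Mixed partial derivative of multi-order `ν`. -/
def mpderiv {n : ℕ} (ν : Fin n → ℕ) (f : (Fin n → ℂ) → ℂ) : (Fin n → ℂ) → ℂ :=
  (List.finRange n).foldr (fun j g => (cpderiv j)^[ν j] g) f

/-- The anisotropic Hermite-Gauss (AHG) function `HG_Θ^ν`. -/
def HG {n : ℕ} (Θ : Matrix (Fin n) (Fin n) ℂ) (ν : Fin n → ℕ) (r : Fin n → ℂ) : ℂ :=
  (-(1 / (Real.sqrt 2 : ℂ))) ^ (∑ j, ν j) *
    ((∏ j, ((ν j).factorial : ℂ)) ^ (-(1 / 2 : ℂ))) *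
    (((Real.pi : ℂ) ^ n * Θ.det) ^ (-(1 / 4 : ℂ))) *
    Complex.exp ((1 / 2 : ℂ) * (r ⬝ᵥ Θ⁻¹.mulVec r)) *
    mpderiv ν (fun x => Complex.exp (-(x ⬝ᵥ Θ⁻¹.mulVec x))) r

/-- The dual anisotropic Hermite-Gauss function `H̃G_Θ^ν`. -/
def HGd {n : ℕ} (Θ : Matrix (Fin n) (Fin n) ℂ) (ν : Fin n → ℕ) (r : Fin n → ℂ) : ℂ :=
  (-(1 / (Real.sqrt 2 : ℂ))) ^ (∑ j, ν j) *
    ((∏ j, ((ν j).factorial : ℂ)) ^ (-(1 / 2 : ℂ))) *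
    (((Real.pi : ℂ) ^ n * Θ.det) ^ (-(1 / 4 : ℂ))) *
    Complex.exp ((1 / 2 : ℂ) * ((Θ⁻¹.mulVec r) ⬝ᵥ Θ.mulVec (Θ⁻¹.mulVec r))) *
    mpderiv ν (fun x => Complex.exp (-(x ⬝ᵥ Θ.mulVec x))) (Θ⁻¹.mulVec r)

/-- Physicists' Hermite polynomial via Rodrigues' formula. -/
def hermiteH (k : ℕ) (z : ℂ) : ℂ :=
  (-1) ^ k * Complex.exp (z ^ 2) * iteratedDeriv k (fun w => Complex.exp (-(w ^ 2))) z

/-- The `k`-th univariate Hermite-Gauss function `ψ_k`. -/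
def psi (k : ℕ) (z : ℂ) : ℂ :=
  ((Real.sqrt Real.pi * 2 ^ k * k.factorial : ℝ) : ℂ) ^ (-(1 / 2 : ℂ)) *
    Complex.exp (-(z ^ 2) / 2) * hermiteH k z

/-- The vector `φ_ν(r)` whose `k`-th entry is `(1/√2)·√(ν_k)·HG_Θ^{ν-ε_k}(r)`. -/
def phiV {n : ℕ} (Θ : Matrix (Fin n) (Fin n) ℂ) (ν : Fin n → ℕ) (r : Fin n → ℂ) :
    Fin n → ℂ :=
  fun k => (1 / (Real.sqrt 2 : ℂ)) * (Real.sqrt (ν k) : ℂ) *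
    HG Θ (fun j => ν j - if j = k then 1 else 0) r

/-- The matrix `Φ_ν(r)`. -/
def PhiM {n : ℕ} (Θ : Matrix (Fin n) (Fin n) ℂ) (ν : Fin n → ℕ) (r : Fin n → ℂ) :
    Matrix (Fin n) (Fin n) ℂ :=
  Matrix.of fun j k =>
    if j = k then
      (Real.sqrt (ν j * (ν j - 1)) : ℂ) * HG Θ (fun l => ν l - if l = j then 2 else 0) r
    else
      (Real.sqrt (ν j * ν k) : ℂ) *
        HG Θ (fun l => ν l - ((if l = j then 1 else 0) + (if l = k then 1 else 0))) r

/-- The `n`-dimensional linear canonical transform with parameter matrix `[[a,b],[c,d]]`. -/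
def LCT {n : ℕ} (a b d : ℂ) (f : (Fin n → ℝ) → ℂ) (ζ : Fin n → ℝ) : ℂ :=
  (1 / (2 * (Real.pi : ℂ) * Complex.I * b)) ^ ((n : ℂ) / 2) *
    Complex.exp (Complex.I * d / (2 * b) * ((fun i => (ζ i : ℂ)) ⬝ᵥ fun i => (ζ i : ℂ))) *
    ∫ r : Fin n → ℝ, f r *
      Complex.exp (-(Complex.I / (2 * b)) *
        ((fun i => (r i : ℂ)) ⬝ᵥ fun i => 2 * (ζ i : ℂ) - a * (r i : ℂ)))

/-- The `n`-dimensional Fourier transform `(2π)^{-n/2} ∫ f(r) e^{-i ζ·r} dr`. -/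
def FT {n : ℕ} (f : (Fin n → ℝ) → ℂ) (ζ : Fin n → ℝ) : ℂ :=
  ((2 * Real.pi : ℝ) : ℂ) ^ (-(n : ℂ) / 2) *
    ∫ r : Fin n → ℝ,
      f r * Complex.exp (-Complex.I * ((fun i => (ζ i : ℂ)) ⬝ᵥ fun i => (r i : ℂ)))

/-- The Wigner-Ville distribution. -/
def WVD {n : ℕ} (f : (Fin n → ℝ) → ℂ) (r ζ : Fin n → ℝ) : ℂ :=
  ((2 * Real.pi : ℝ) : ℂ) ^ (-(n : ℂ) / 2) *
    ∫ ξ : Fin n → ℝ,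
      f (fun i => r i - ξ i / 2) * (starRingEnd ℂ) (f (fun i => r i + ξ i / 2)) *
        Complex.exp (-Complex.I * ((fun i => (ζ i : ℂ)) ⬝ᵥ fun i => (ξ i : ℂ)))

end AHGPaper

/-! Write `q(x) = xᵀΘ⁻¹x`. Conjugating `∂ᵢ` by the Gaussian gives the operators
`Dᵢ = e^{q} ∂ᵢ e^{-q} = ∂ᵢ - ∂ᵢq` on polynomials, so `∂^ν e^{-q} = Q_ν e^{-q}` with `Q_ν = D^ν 1`
and `HG^ν = c_ν Q_ν e^{-q/2}`. As `q` is quadratic, `[∂ⱼ, Dᵢ] = -2Θ⁻¹ⱼᵢ` is a scalar, and pushing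
`∂ⱼ` through `D^ν` (which kills `1`) gives `∂ⱼ Q_ν = -2 ∑ₖ Θ⁻¹ⱼₖ νₖ Q_{ν-εₖ}`. Hence
`∂ⱼ HG^ν = c_ν (∂ⱼ Q_ν - (Θ⁻¹x)ⱼ Q_ν) e^{-q/2}`, and the normalisations satisfy
`√(νₖ/2) c_{ν-εₖ} = -νₖ c_ν`, which turns the first term into `2 (Θ⁻¹φ_ν)ⱼ`. -/

section Commutator

variable {R A : Type*} [CommSemiring R] [Semiring A] [Algebra R A]

theorem mul_pow_eq_pow_mul_add_of_mul_eq {T D : A} {c : R} (h : T * D = D * T + c • 1)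
    (m : ℕ) : T * D ^ m = D ^ m * T + (m * c) • D ^ (m - 1) := by
  induction m with
  | zero => simp
  | succ m ih =>
    rw [pow_succ, ← mul_assoc, ih, add_mul, mul_assoc, h, mul_add, ← mul_assoc, smul_mul_assoc,
      mul_smul_one, ← pow_succ]
    rcases m with _ | m
    · simp
    · rw [Nat.add_sub_cancel, ← pow_succ, add_assoc, ← add_smul]
      push_cast
      ring_nf

variable {ι : Type*} [DecidableEq ι] {T : A} {D : ι → A} {c : ι → R}

theorem mul_list_prod_pow_eq (h : ∀ i, T * D i = D i * T + c i • 1) (ν : ι → ℕ)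
    {l : List ι} (hl : l.Nodup) :
    T * (l.map fun i => D i ^ ν i).prod = (l.map fun i => D i ^ ν i).prod * T +
      (l.map fun k =>
        (ν k * c k) • (l.map fun i => D i ^ (ν - Pi.single k 1 : ι → ℕ) i).prod).sum := by
  induction l with
  | nil => simp
  | cons i l ih =>
    obtain ⟨hi, hl⟩ := List.nodup_cons.mp hl
    have hhead : ∀ k ∈ l, D i ^ (ν - Pi.single k 1 : ι → ℕ) i = D i ^ ν i := fun k hk => by
      rw [Pi.sub_apply, Pi.single_eq_of_ne (ne_of_mem_of_not_mem hk hi).symm, Nat.sub_zero]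
    have htail : (l.map fun j => D j ^ (ν - Pi.single i 1 : ι → ℕ) j) =
        l.map fun j => D j ^ ν j := List.map_congr_left fun j hj => by
      rw [Pi.sub_apply, Pi.single_eq_of_ne (ne_of_mem_of_not_mem hj hi), Nat.sub_zero]
    have hsum : D i ^ ν i * (l.map fun k => (ν k * c k) •
          (l.map fun j => D j ^ (ν - Pi.single k 1 : ι → ℕ) j).prod).sum =
        (l.map fun k => (ν k * c k) • (D i ^ (ν - Pi.single k 1 : ι → ℕ) i *
          (l.map fun j => D j ^ (ν - Pi.single k 1 : ι → ℕ) j).prod)).sum := by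
      rw [← List.sum_map_mul_left]
      exact congrArg List.sum (List.map_congr_left fun k hk => by rw [hhead k hk, mul_smul_comm])
    have hself : (ν - Pi.single i 1 : ι → ℕ) i = ν i - 1 := by simp
    simp only [List.map_cons, List.prod_cons, List.sum_cons, htail, hself]
    rw [← mul_assoc, mul_pow_eq_pow_mul_add_of_mul_eq (h i), add_mul, mul_assoc, ih hl, mul_add,
      hsum, smul_mul_assoc, add_assoc, add_comm (List.sum _), mul_assoc]

end Commutator

theorem Complex.ofReal_cpow_neg_half {x : ℝ} (hx : 0 ≤ x) :
    (x : ℂ) ^ (-(1 / 2) : ℂ) = ((√x : ℝ) : ℂ)⁻¹ := by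
  rw [Complex.cpow_neg, Real.sqrt_eq_rpow, Complex.ofReal_cpow hx]
  norm_num

theorem Finset.prod_factorial_add_single {ι : Type*} [Fintype ι] [DecidableEq ι] (μ : ι → ℕ)
    (k : ι) :
    ∏ j, ((μ + Pi.single k 1 : ι → ℕ) j).factorial = (μ k + 1) * ∏ j, (μ j).factorial := by
  rw [← Finset.mul_prod_erase _ _ (Finset.mem_univ k),
    ← Finset.mul_prod_erase _ (fun j => (μ j).factorial) (Finset.mem_univ k),
    Finset.prod_congr rfl fun j hj => by
      rw [Pi.add_apply, Pi.single_eq_of_ne (Finset.ne_of_mem_erase hj), add_zero]]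
  simp [Nat.factorial_succ, mul_assoc]

namespace MvPolynomial

section Twisted

variable {R σ : Type*} [CommRing R]

theorem pderiv_pderiv_comm (i j : σ) (P : MvPolynomial σ R) :
    pderiv i (pderiv j P) = pderiv j (pderiv i P) := by
  have h : ⁅pderiv i, pderiv j⁆ = (0 : Derivation R (MvPolynomial σ R) (MvPolynomial σ R)) :=
    derivation_ext fun k => by
      classical
      rw [Derivation.commutator_apply, pderiv_X, pderiv_X]
      simp [Pi.single_apply, apply_ite]
  simpa [Derivation.commutator_apply, sub_eq_zero] using congrArg (· P) h

variable (g : MvPolynomial σ R)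

/-- `twistedPDeriv g i P = e^{-g} ∂ᵢ (P e^{g})`, see `AHGPaper.cpderiv_polyMulExp`. -/
def twistedPDeriv (i : σ) : Module.End R (MvPolynomial σ R) :=
  (pderiv i).toLinearMap + LinearMap.mulLeft R (pderiv i g)

theorem twistedPDeriv_apply (i : σ) (P : MvPolynomial σ R) :
    twistedPDeriv g i P = pderiv i P + pderiv i g * P := rfl

theorem pderiv_mul_twistedPDeriv {i j : σ} {a : R} (h : pderiv j (pderiv i g) = C a) :
    (pderiv j).toLinearMap * twistedPDeriv g i =
      twistedPDeriv g i * (pderiv j).toLinearMap + a • 1 := by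
  refine LinearMap.ext fun P => ?_
  simp only [Module.End.mul_apply, LinearMap.add_apply, LinearMap.smul_apply, Module.End.one_apply,
    Derivation.coeFn_coe, twistedPDeriv_apply, map_add, pderiv_mul, h, pderiv_pderiv_comm j i,
    ← C_mul']
  ring

def twistedPDerivPow {n : ℕ} (g : MvPolynomial (Fin n) R) (ν : Fin n → ℕ) :
    Module.End R (MvPolynomial (Fin n) R) :=
  ((List.finRange n).map fun i => twistedPDeriv g i ^ ν i).prod

theorem pderiv_twistedPDerivPow_one {n : ℕ} (g : MvPolynomial (Fin n) R) {j : Fin n}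
    {a : Fin n → R} (h : ∀ i, pderiv j (pderiv i g) = C (a i)) (ν : Fin n → ℕ) :
    pderiv j (twistedPDerivPow g ν 1) =
      ∑ k, (ν k * a k) • twistedPDerivPow g (ν - Pi.single k 1) 1 := by
  have := mul_list_prod_pow_eq (fun i => pderiv_mul_twistedPDeriv g (h i)) ν
    (List.nodup_finRange n)
  rw [← Fin.sum_univ_def] at this
  simpa [twistedPDerivPow, Module.End.mul_apply, pderiv_one, LinearMap.sum_apply] using
    congrArg (· 1) this

end Twisted

section QuadForm

variable {R ι : Type*} [CommRing R] [Fintype ι]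

def quadForm (A : Matrix ι ι R) : MvPolynomial ι R :=
  ∑ i, ∑ k, C (A i k) * X i * X k

theorem eval_quadForm (A : Matrix ι ι R) (x : ι → R) :
    eval x (quadForm A) = x ⬝ᵥ A *ᵥ x := by
  simp only [quadForm, map_sum, eval_mul, eval_C, eval_X, dotProduct, Matrix.mulVec,
    Finset.mul_sum]
  exact Finset.sum_congr rfl fun i _ => Finset.sum_congr rfl fun k _ => by ring

theorem pderiv_quadForm (A : Matrix ι ι R) (j : ι) :
    pderiv j (quadForm A) = ∑ k, C (A j k + A k j) * X k := by
  classical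
  simp [quadForm, pderiv_X, Pi.single_apply, Finset.sum_add_distrib, add_mul, mul_comm (X _),
    add_comm]

theorem pderiv_pderiv_quadForm (A : Matrix ι ι R) (i j : ι) :
    pderiv i (pderiv j (quadForm A)) = C (A j i + A i j) := by
  classical
  simp [pderiv_quadForm, pderiv_X, Pi.single_apply]

end QuadForm

theorem hasDerivAt_eval_update {𝕜 σ : Type*} [NontriviallyNormedField 𝕜] [DecidableEq σ]
    (P : MvPolynomial σ 𝕜) (x : σ → 𝕜) (j : σ) :
    HasDerivAt (fun t => eval (Function.update x j t) P) (eval x (pderiv j P)) (x j) := by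
  induction P using MvPolynomial.induction_on with
  | C a => simpa using hasDerivAt_const (x j) a
  | add p q hp hq =>
    simp only [map_add]
    exact hp.fun_add hq
  | mul_X p k hp =>
    by_cases hk : k = j
    · subst hk
      have hfun : (fun t => eval (Function.update x k t) (p * X k)) =
          fun t => eval (Function.update x k t) p * t := by
        funext t; simp
      rw [hfun]
      exact (hp.fun_mul (hasDerivAt_id' (x k))).congr_deriv (by simp [add_comm, mul_comm])
    · have hfun : (fun t => eval (Function.update x j t) (p * X k)) =
          fun t => eval (Function.update x j t) p * x k := by
        funext t; simp [Function.update_of_ne hk]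
      rw [hfun]
      exact (hp.mul_const (x k)).congr_deriv (by simp [pderiv_X_of_ne hk, mul_comm])

end MvPolynomial

namespace AHGPaper

open MvPolynomial

variable {n : ℕ}

def polyMulExp (P g : MvPolynomial (Fin n) ℂ) (x : Fin n → ℂ) : ℂ :=
  eval x P * Complex.exp (eval x g)

theorem cpderiv_polyMulExp (P g : MvPolynomial (Fin n) ℂ) (j : Fin n) :
    cpderiv j (polyMulExp P g) = polyMulExp (twistedPDeriv g j P) g := by
  funext x
  have hP := hasDerivAt_eval_update P x j
  have hg := (hasDerivAt_eval_update g x j).cexp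
  refine (hP.mul hg).deriv.trans ?_
  simp only [polyMulExp, twistedPDeriv_apply, eval_add, eval_mul, Function.update_eq_self]
  ring

theorem mpderiv_polyMulExp (P g : MvPolynomial (Fin n) ℂ) (ν : Fin n → ℕ) :
    mpderiv ν (polyMulExp P g) = polyMulExp (twistedPDerivPow g ν P) g := by
  suffices ∀ l : List (Fin n), l.foldr (fun j f => (cpderiv j)^[ν j] f) (polyMulExp P g) =
      polyMulExp ((l.map fun i => twistedPDeriv g i ^ ν i).prod P) g from this _
  intro l
  induction l with
  | nil => rfl
  | cons i l ih =>
    have hsemi : Function.Semiconj (polyMulExp · g) (twistedPDeriv g i) (cpderiv i) :=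
      fun P => (cpderiv_polyMulExp P g i).symm
    simp only [List.foldr_cons, ih, List.map_cons, List.prod_cons, Module.End.mul_apply,
      Module.End.pow_apply, (hsemi.iterate_right (ν i)) _]

def hgConst (Θ : Matrix (Fin n) (Fin n) ℂ) (ν : Fin n → ℕ) : ℂ :=
  (-(1 / (Real.sqrt 2 : ℂ))) ^ (∑ j, ν j) *
    ((∏ j, ((ν j).factorial : ℂ)) ^ (-(1 / 2 : ℂ))) *
    (((Real.pi : ℂ) ^ n * Θ.det) ^ (-(1 / 4 : ℂ)))

theorem hgConst_add_single (Θ : Matrix (Fin n) (Fin n) ℂ) (μ : Fin n → ℕ) (k : Fin n) :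
    hgConst Θ (μ + Pi.single k 1) =
      -(1 / (Real.sqrt 2 : ℂ)) * ((√(μ k + 1) : ℝ) : ℂ)⁻¹ * hgConst Θ μ := by
  have hsum : ∑ j, (μ + Pi.single k 1 : Fin n → ℕ) j = ∑ j, μ j + 1 := by
    simp [Finset.sum_add_distrib]
  have hprod : (∏ j, (((μ + Pi.single k 1 : Fin n → ℕ) j).factorial : ℂ)) ^ (-(1 / 2 : ℂ)) =
      ((√(μ k + 1) : ℝ) : ℂ)⁻¹ * (∏ j, ((μ j).factorial : ℂ)) ^ (-(1 / 2 : ℂ)) := by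
    have h := Complex.mul_cpow_ofReal_nonneg (Nat.cast_nonneg (μ k + 1))
      (Nat.cast_nonneg (∏ j, (μ j).factorial)) (-(1 / 2 : ℂ))
    push_cast at h
    rw [← Nat.cast_prod, Finset.prod_factorial_add_single, Nat.cast_mul, Nat.cast_prod]
    push_cast
    rw [h, ← Complex.ofReal_cpow_neg_half (by positivity)]
    norm_num
  rw [hgConst, hgConst, hsum, hprod, pow_succ]
  ring

theorem sqrt_mul_hgConst_sub_single (Θ : Matrix (Fin n) (Fin n) ℂ) (ν : Fin n → ℕ)
    (k : Fin n) :
    (1 / (Real.sqrt 2 : ℂ)) * (Real.sqrt (ν k) : ℂ) * hgConst Θ (ν - Pi.single k 1) =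
      -(ν k) * hgConst Θ ν := by
  rcases Nat.eq_zero_or_pos (ν k) with h | h
  -- here `ν - Pi.single k 1` truncates to `ν`, but `√(ν k) = 0` gives the paper's `HG^{ν-εₖ} = 0`
  · simp [h]
  have hν : ν = (ν - Pi.single k 1) + Pi.single k 1 := by
    ext j
    by_cases hj : j = k
    · subst hj; simp; omega
    · simp [hj]
  conv_rhs => rw [hν, hgConst_add_single]
  have hk : (((ν - Pi.single k 1 : Fin n → ℕ) k : ℕ) : ℝ) + 1 = ν k := by
    simp [Nat.cast_sub h]
  rw [hk, ← hν]
  have hsqrt : ((√(ν k : ℝ) : ℝ) : ℂ) ^ 2 = ν k := by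
    rw [← Complex.ofReal_pow, Real.sq_sqrt (Nat.cast_nonneg _), Complex.ofReal_natCast]
  have hne : ((√(ν k : ℝ) : ℝ) : ℂ) ≠ 0 := by
    rw [Complex.ofReal_ne_zero, Real.sqrt_ne_zero']
    exact_mod_cast h
  field_simp
  rw [hsqrt]
  ring

/-- `∂^ν e^{-xᵀAx} = hermitePoly A ν · e^{-xᵀAx}`. -/
def hermitePoly {R : Type*} [CommRing R] (A : Matrix (Fin n) (Fin n) R)
    (ν : Fin n → ℕ) : MvPolynomial (Fin n) R :=
  twistedPDerivPow (-quadForm A) ν 1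

theorem pderiv_hermitePoly {R : Type*} [CommRing R] {A : Matrix (Fin n) (Fin n) R}
    (hA : A.IsSymm) (ν : Fin n → ℕ) (j : Fin n) :
    pderiv j (hermitePoly A ν) =
      ∑ k, (ν k * -(2 * A j k)) • hermitePoly A (ν - Pi.single k 1) := by
  refine pderiv_twistedPDerivPow_one _ (fun k => ?_) ν
  rw [map_neg, map_neg, pderiv_pderiv_quadForm, hA.apply j k, ← two_mul, map_neg]

theorem HG_apply (Θ : Matrix (Fin n) (Fin n) ℂ) (ν : Fin n → ℕ) (x : Fin n → ℂ) :
    HG Θ ν x =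
      hgConst Θ ν * polyMulExp (hermitePoly Θ⁻¹ ν) (C (-(1 / 2)) * quadForm Θ⁻¹) x := by
  have hgauss : (fun x => Complex.exp (-(x ⬝ᵥ Θ⁻¹ *ᵥ x))) = polyMulExp 1 (-quadForm Θ⁻¹) := by
    funext x
    simp [polyMulExp, eval_quadForm]
  rw [HG, hgauss, mpderiv_polyMulExp]
  simp only [polyMulExp, hermitePoly, hgConst, eval_mul, eval_C, eval_neg, eval_quadForm]
  rw [show -(1 / 2 : ℂ) * (x ⬝ᵥ Θ⁻¹ *ᵥ x) = 1 / 2 * (x ⬝ᵥ Θ⁻¹ *ᵥ x) + -(x ⬝ᵥ Θ⁻¹ *ᵥ x) by ring,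
    Complex.exp_add]
  ring

theorem cpderiv_const_mul (c : ℂ) (f : (Fin n → ℂ) → ℂ) (j : Fin n) :
    cpderiv j (fun x => c * f x) = fun x => c * cpderiv j f x := by
  funext x
  exact deriv_const_mul_field _

theorem cpderiv_HG {Θ : Matrix (Fin n) (Fin n) ℂ} (hΘ : Θ.IsSymm) (ν : Fin n → ℕ) (j : Fin n)
    (x : Fin n → ℂ) :
    cpderiv j (HG Θ ν) x = ∑ k, Θ⁻¹ j k *
      (-2 * ν k * hgConst Θ ν *
          polyMulExp (hermitePoly Θ⁻¹ (ν - Pi.single k 1)) (C (-(1 / 2)) * quadForm Θ⁻¹) x -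
        x k * HG Θ ν x) := by
  rw [show HG Θ ν = _ from funext (HG_apply Θ ν), cpderiv_const_mul, cpderiv_polyMulExp]
  simp only [polyMulExp, twistedPDeriv_apply, pderiv_hermitePoly hΘ.inv, pderiv_C_mul,
    pderiv_quadForm, hΘ.inv.apply, eval_add, eval_mul, eval_C, map_sum, smul_eval, eval_X]
  simp only [Finset.mul_sum, Finset.sum_mul, ← Finset.sum_add_distrib]
  exact Finset.sum_congr rfl fun k _ => by ring

theorem two_mul_phiV (Θ : Matrix (Fin n) (Fin n) ℂ) (ν : Fin n → ℕ) (x : Fin n → ℂ) (k : Fin n) :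
    2 * phiV Θ ν x k = -2 * ν k * hgConst Θ ν *
      polyMulExp (hermitePoly Θ⁻¹ (ν - Pi.single k 1)) (C (-(1 / 2)) * quadForm Θ⁻¹) x := by
  have hsub : (fun j => ν j - if j = k then 1 else 0) = ν - Pi.single k 1 := by
    funext j
    simp [Pi.single_apply]
  rw [phiV, hsub, HG_apply]
  linear_combination (2 * polyMulExp (hermitePoly Θ⁻¹ (ν - Pi.single k 1))
    (C (-(1 / 2)) * quadForm Θ⁻¹) x) * sqrt_mul_hgConst_sub_single Θ ν k

end AHGPaper

open AHGPaper

theorem ahg_gradient_general (n : ℕ) (Θ : Matrix (Fin n) (Fin n) ℂ)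
    (hsym : Θ.IsSymm)
    (ν : Fin n → ℕ) (r : Fin n → ℝ) :
    (fun j => cpderiv j (HG Θ ν) (fun i => (r i : ℂ))) =
      Θ⁻¹.mulVec (fun k =>
        2 * phiV Θ ν (fun i => (r i : ℂ)) k -
          (r k : ℂ) * HG Θ ν (fun i => (r i : ℂ))) := by
  funext j
  simp only [cpderiv_HG hsym, Matrix.mulVec, dotProduct, two_mul_phiV]

/-- gradient of the AHG function. -/
theorem ahg_gradient (n : ℕ) (hn : 1 ≤ n) (Θ : Matrix (Fin n) (Fin n) ℂ)
    (hsym : Θ.IsSymm) (hpd : (Θ.map Complex.re).PosDef)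
    (ν : Fin n → ℕ) (r : Fin n → ℝ) :
    (fun j => cpderiv j (HG Θ ν) (fun i => (r i : ℂ))) =
      Θ⁻¹.mulVec (fun k =>
        2 * phiV Θ ν (fun i => (r i : ℂ)) k -
          (r k : ℂ) * HG Θ ν (fun i => (r i : ℂ))) :=
  ahg_gradient_general n Θ hsym ν r
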